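/- arXiv:2312.07393 — 2 statements merged into one kernel-verified Lean document; each statement's English description precedes it below -/
import Mathlib

section
/- Every permutation avoiding all twelve patterns 12543, 13254, 13524, 13542, 21543, 125364, 125634, 215364, 215634, 315264, 315624, 315642 (i.e., every Cartwright–Sturmfels permutation) also avoids all eight patterns 13254, 21543, 214635, 215364, 215634, 241635, 315264, 4261735 (i.e., is CDG). -/
/-- `w` contains the pattern `p` (given as a permutation of `Fin k` in one-line form):
there are indices `i₁ < ⋯ < i_k` whose images under `w` are in the same relative order
as the values of `p`. -/
def ContainsPattern {n k : ℕ} (w : Equiv.Perm (Fin n)) (p : Fin k → Fin k) : Prop :=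
  ∃ f : Fin k → Fin n, StrictMono f ∧ ∀ a b : Fin k, p a < p b ↔ w (f a) < w (f b)

def AvoidsPattern {n k : ℕ} (w : Equiv.Perm (Fin n)) (p : Fin k → Fin k) : Prop :=
  ¬ ContainsPattern w p


lemma avoids_of_sub {n k m : ℕ} (w : Equiv.Perm (Fin n)) (p : Fin k → Fin k)
    (q : Fin m → Fin m) (g : Fin k → Fin m) (hg : StrictMono g)
    (hpq : ∀ a b : Fin k, p a < p b ↔ q (g a) < q (g b))
    (hp : AvoidsPattern w p) : AvoidsPattern w q := by
  rintro ⟨f, hf, hfq⟩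
  exact hp ⟨f ∘ g, hf.comp hg, fun a b => (hpq a b).trans (hfq (g a) (g b))⟩

/-- Every Cartwright–Sturmfels permutation (avoiding the twelve listed patterns) is CDG
(avoids the eight listed patterns).  Patterns are written 0-indexed: e.g. 12543 is
`![0,1,4,3,2]`. -/
theorem cartwright_sturmfels_implies_CDG (n : ℕ) (w : Equiv.Perm (Fin n))
    (h1 : AvoidsPattern w ![0,1,4,3,2])       -- 12543
    (h2 : AvoidsPattern w ![0,2,1,4,3])       -- 13254
    (h3 : AvoidsPattern w ![0,2,4,1,3])       -- 13524
    (h4 : AvoidsPattern w ![0,2,4,3,1])       -- 13542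
    (h5 : AvoidsPattern w ![1,0,4,3,2])       -- 21543
    (h6 : AvoidsPattern w ![0,1,4,2,5,3])     -- 125364
    (h7 : AvoidsPattern w ![0,1,4,5,2,3])     -- 125634
    (h8 : AvoidsPattern w ![1,0,4,2,5,3])     -- 215364
    (h9 : AvoidsPattern w ![1,0,4,5,2,3])     -- 215634
    (h10 : AvoidsPattern w ![2,0,4,1,5,3])    -- 315264
    (h11 : AvoidsPattern w ![2,0,4,5,1,3])    -- 315624
    (h12 : AvoidsPattern w ![2,0,4,5,3,1]) :  -- 315642
    AvoidsPattern w ![0,2,1,4,3] ∧            -- 13254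
    AvoidsPattern w ![1,0,4,3,2] ∧            -- 21543
    AvoidsPattern w ![1,0,3,5,2,4] ∧          -- 214635
    AvoidsPattern w ![1,0,4,2,5,3] ∧          -- 215364
    AvoidsPattern w ![1,0,4,5,2,3] ∧          -- 215634
    AvoidsPattern w ![1,3,0,5,2,4] ∧          -- 241635
    AvoidsPattern w ![2,0,4,1,5,3] ∧          -- 315264
    AvoidsPattern w ![3,1,5,0,6,2,4] := by    -- 4261735
  refine ⟨h2, h5, ?_, h8, h9, ?_, h10, ?_⟩
  · exact avoids_of_sub w ![0,2,4,1,3] _ ![0,2,3,4,5] (by decide) (by decide) h3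
  · exact avoids_of_sub w ![0,2,4,1,3] _ ![0,1,3,4,5] (by decide) (by decide) h3
  · exact avoids_of_sub w ![2,0,4,5,1,3] _ ![0,1,2,4,5,6] (by decide) (by decide) h11
end

section
/- If A and B are n×n alternating sign matrices, then the entrywise minimum r(i,j) = min(rk_A(i,j), rk_B(i,j)) of their rank functions is again the rank function of some n×n alternating sign matrix. -/
def IsASM {n : ℕ} (A : Matrix (Fin n) (Fin n) ℤ) : Prop :=
  (∀ i j, A i j = -1 ∨ A i j = 0 ∨ A i j = 1) ∧
  (∀ i k, (∑ j ∈ Finset.Iic k, A i j) = 0 ∨ (∑ j ∈ Finset.Iic k, A i j) = 1) ∧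
  (∀ j k, (∑ i ∈ Finset.Iic k, A i j) = 0 ∨ (∑ i ∈ Finset.Iic k, A i j) = 1) ∧
  (∀ i, (∑ j, A i j) = 1) ∧
  (∀ j, (∑ i, A i j) = 1)

def rk {n : ℕ} (A : Matrix (Fin n) (Fin n) ℤ) (a b : ℕ) : ℤ :=
  ∑ i ∈ Finset.univ.filter (fun i : Fin n => (i : ℕ) < a),
    ∑ j ∈ Finset.univ.filter (fun j : Fin n => (j : ℕ) < b), A i j


section Aux

variable {n : ℕ}

private lemma sum_filter_lt (g : Fin n → ℤ) (a : ℕ) :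
    ∑ i ∈ Finset.univ.filter (fun i : Fin n => (i : ℕ) < a), g i
      = ∑ i ∈ Finset.range a, (if h : i < n then g ⟨i, h⟩ else 0) := by
  induction a with
  | zero => simp
  | succ a ih =>
    rw [Finset.sum_range_succ, ← ih]
    by_cases ha : a < n
    · have he : (Finset.univ.filter (fun i : Fin n => (i : ℕ) < a + 1))
        = insert ⟨a, ha⟩ (Finset.univ.filter (fun i : Fin n => (i : ℕ) < a)) := by
        ext i
        simp only [Finset.mem_insert, Finset.mem_filter, Finset.mem_univ, true_and,
          Fin.ext_iff]
        omega
      rw [he, Finset.sum_insert (by simp), dif_pos ha]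
      ring
    · have h1 : (Finset.univ.filter (fun i : Fin n => (i : ℕ) < a + 1))
        = Finset.univ.filter (fun i : Fin n => (i : ℕ) < a) := by
        ext i
        have := i.isLt
        simp only [Finset.mem_filter, Finset.mem_univ, true_and]
        omega
      rw [h1, dif_neg ha, add_zero]

private def extM (M : Matrix (Fin n) (Fin n) ℤ) (i j : ℕ) : ℤ :=
  if h : i < n ∧ j < n then M ⟨i, h.1⟩ ⟨j, h.2⟩ else 0

private def RR (M : Matrix (Fin n) (Fin n) ℤ) (a b : ℕ) : ℤ :=
  ∑ i ∈ Finset.range a, ∑ j ∈ Finset.range b, extM M i j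

private lemma rk_eq_RR (M : Matrix (Fin n) (Fin n) ℤ) (a b : ℕ) :
    rk M a b = RR M a b := by
  unfold rk RR
  rw [sum_filter_lt (fun i => ∑ j ∈ Finset.univ.filter (fun j : Fin n => (j : ℕ) < b), M i j) a]
  refine Finset.sum_congr rfl fun i hi => ?_
  by_cases h : i < n
  · rw [dif_pos h, sum_filter_lt (fun j => M ⟨i, h⟩ j) b]
    refine Finset.sum_congr rfl fun j hj => ?_
    by_cases h' : j < n
    · rw [dif_pos h']; simp [extM, h, h']
    · rw [dif_neg h']; simp [extM, h']
  · rw [dif_neg h]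
    refine (Finset.sum_eq_zero fun j hj => ?_).symm
    simp [extM, h]

private lemma RR_zero_right (M : Matrix (Fin n) (Fin n) ℤ) (a : ℕ) : RR M a 0 = 0 := by
  simp [RR]

private lemma RR_zero_left (M : Matrix (Fin n) (Fin n) ℤ) (b : ℕ) : RR M 0 b = 0 := by
  simp [RR]

private lemma RR_succ_right (M : Matrix (Fin n) (Fin n) ℤ) (a b : ℕ) :
    RR M a (b + 1) = RR M a b + ∑ i ∈ Finset.range a, extM M i b := by
  simp [RR, Finset.sum_range_succ, Finset.sum_add_distrib]

private lemma RR_succ_left (M : Matrix (Fin n) (Fin n) ℤ) (a b : ℕ) :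
    RR M (a + 1) b = RR M a b + ∑ j ∈ Finset.range b, extM M a j := by
  simp [RR, Finset.sum_range_succ]

private lemma cs01 {M : Matrix (Fin n) (Fin n) ℤ} (hM : IsASM M) (a b : ℕ) :
    (∑ i ∈ Finset.range a, extM M i b) = 0 ∨ (∑ i ∈ Finset.range a, extM M i b) = 1 := by
  by_cases hb : b < n
  · have hconv : (∑ i ∈ Finset.range a, extM M i b)
        = ∑ i ∈ Finset.univ.filter (fun i : Fin n => (i : ℕ) < a), M i ⟨b, hb⟩ := by
      rw [sum_filter_lt (fun i => M i ⟨b, hb⟩) a]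
      refine Finset.sum_congr rfl fun i hi => ?_
      by_cases h : i < n
      · simp [extM, h, hb]
      · simp [extM, h]
    rw [hconv]
    rcases Nat.eq_zero_or_pos a with ha | ha
    · subst ha; simp
    · have hn : 0 < n := by omega
      have hk : min (a - 1) (n - 1) < n := by omega
      have hfil : (Finset.univ.filter (fun i : Fin n => (i : ℕ) < a))
          = Finset.Iic (⟨min (a - 1) (n - 1), hk⟩ : Fin n) := by
        ext i
        have := i.isLt
        simp only [Finset.mem_filter, Finset.mem_univ, true_and, Finset.mem_Iic, Fin.le_def]
        omega
      rw [hfil]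
      exact hM.2.2.1 ⟨b, hb⟩ _
  · left
    refine Finset.sum_eq_zero fun i hi => ?_
    simp [extM, hb]

private lemma rs01 {M : Matrix (Fin n) (Fin n) ℤ} (hM : IsASM M) (a b : ℕ) :
    (∑ j ∈ Finset.range b, extM M a j) = 0 ∨ (∑ j ∈ Finset.range b, extM M a j) = 1 := by
  by_cases ha : a < n
  · have hconv : (∑ j ∈ Finset.range b, extM M a j)
        = ∑ j ∈ Finset.univ.filter (fun j : Fin n => (j : ℕ) < b), M ⟨a, ha⟩ j := by
      rw [sum_filter_lt (fun j => M ⟨a, ha⟩ j) b]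
      refine Finset.sum_congr rfl fun j hj => ?_
      by_cases h : j < n
      · simp [extM, h, ha]
      · simp [extM, h]
    rw [hconv]
    rcases Nat.eq_zero_or_pos b with hb | hb
    · subst hb; simp
    · have hn : 0 < n := by omega
      have hk : min (b - 1) (n - 1) < n := by omega
      have hfil : (Finset.univ.filter (fun j : Fin n => (j : ℕ) < b))
          = Finset.Iic (⟨min (b - 1) (n - 1), hk⟩ : Fin n) := by
        ext j
        have := j.isLt
        simp only [Finset.mem_filter, Finset.mem_univ, true_and, Finset.mem_Iic, Fin.le_def]
        omega
      rw [hfil]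
      exact hM.2.1 ⟨a, ha⟩ _
  · left
    refine Finset.sum_eq_zero fun j hj => ?_
    simp [extM, ha]

private lemma RR_right_full {M : Matrix (Fin n) (Fin n) ℤ} (hM : IsASM M) :
    ∀ a, a ≤ n → RR M a n = a := by
  intro a
  induction a with
  | zero => intro _; simp [RR_zero_left]
  | succ a ih =>
    intro ha
    have ha' : a < n := ha
    rw [RR_succ_left, ih (le_of_lt ha')]
    have hrow : (∑ j ∈ Finset.range n, extM M a j) = 1 := by
      have h1 : (∑ j ∈ Finset.range n, extM M a j)
          = ∑ j ∈ Finset.univ.filter (fun j : Fin n => (j : ℕ) < n), M ⟨a, ha'⟩ j := by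
        rw [sum_filter_lt (fun j => M ⟨a, ha'⟩ j) n]
        refine Finset.sum_congr rfl fun j hj => ?_
        have h : j < n := Finset.mem_range.mp hj
        simp [extM, h, ha']
      have h2 : (Finset.univ.filter (fun j : Fin n => (j : ℕ) < n)) = Finset.univ := by
        ext j; simp [j.isLt]
      rw [h1, h2]
      exact hM.2.2.2.1 ⟨a, ha'⟩
    rw [hrow]
    push_cast
    ring

private lemma RR_left_full {M : Matrix (Fin n) (Fin n) ℤ} (hM : IsASM M) :
    ∀ b, b ≤ n → RR M n b = b := by
  intro b
  induction b with
  | zero => intro _; simp [RR_zero_right]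
  | succ b ih =>
    intro hb
    have hb' : b < n := hb
    rw [RR_succ_right, ih (le_of_lt hb')]
    have hcol : (∑ i ∈ Finset.range n, extM M i b) = 1 := by
      have h1 : (∑ i ∈ Finset.range n, extM M i b)
          = ∑ i ∈ Finset.univ.filter (fun i : Fin n => (i : ℕ) < n), M i ⟨b, hb'⟩ := by
        rw [sum_filter_lt (fun i => M i ⟨b, hb'⟩) n]
        refine Finset.sum_congr rfl fun i hi => ?_
        have h : i < n := Finset.mem_range.mp hi
        simp [extM, h, hb']
      have h2 : (Finset.univ.filter (fun i : Fin n => (i : ℕ) < n)) = Finset.univ := by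
        ext i; simp [i.isLt]
      rw [h1, h2]
      exact hM.2.2.2.2 ⟨b, hb'⟩
    rw [hcol]
    push_cast
    ring

end Aux

/-- The entrywise minimum of the rank functions of two ASMs is again the rank function
of an ASM. -/
theorem min_rank_function_is_asm_rank_function (n : ℕ)
    (A B : Matrix (Fin n) (Fin n) ℤ) (hA : IsASM A) (hB : IsASM B) :
    ∃ C : Matrix (Fin n) (Fin n) ℤ, IsASM C ∧
      ∀ a b : ℕ, a ≤ n → b ≤ n → rk C a b = min (rk A a b) (rk B a b) := by
  classical
  set r : ℕ → ℕ → ℤ := fun a b => min (RR A a b) (RR B a b) with hr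
  -- step properties of r
  have vstep : ∀ a b, r a b ≤ r (a + 1) b ∧ r (a + 1) b ≤ r a b + 1 := by
    intro a b
    have h1 := RR_succ_left A a b
    have h2 := RR_succ_left B a b
    have h3 := rs01 hA a b
    have h4 := rs01 hB a b
    simp only [hr]
    omega
  have hstep : ∀ a b, r a b ≤ r a (b + 1) ∧ r a (b + 1) ≤ r a b + 1 := by
    intro a b
    have h1 := RR_succ_right A a b
    have h2 := RR_succ_right B a b
    have h3 := cs01 hA a b
    have h4 := cs01 hB a b
    simp only [hr]
    omega
  have r0l : ∀ b, r 0 b = 0 := by intro b; simp [hr, RR_zero_left]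
  have r0r : ∀ a, r a 0 = 0 := by intro a; simp [hr, RR_zero_right]
  have rfull_r : ∀ a, a ≤ n → r a n = a := by
    intro a ha; simp [hr, RR_right_full hA a ha, RR_right_full hB a ha]
  have rfull_l : ∀ b, b ≤ n → r n b = b := by
    intro b hb; simp [hr, RR_left_full hA b hb, RR_left_full hB b hb]
  set C : Matrix (Fin n) (Fin n) ℤ :=
    fun i j => r (i + 1) (j + 1) - r i (j + 1) - r (i + 1) j + r i j with hC
  -- row telescoping
  have row_tel : ∀ (i : Fin n) (m : ℕ), m ≤ n →
      (∑ j ∈ Finset.univ.filter (fun j : Fin n => (j : ℕ) < m), C i j)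
        = r (i + 1) m - r i m := by
    intro i m hm
    rw [sum_filter_lt (fun j => C i j) m]
    have : (∑ j ∈ Finset.range m, (if h : j < n then C i ⟨j, h⟩ else 0))
        = ∑ j ∈ Finset.range m, ((r (i + 1) (j + 1) - r i (j + 1)) - (r (i + 1) j - r i j)) := by
      refine Finset.sum_congr rfl fun j hj => ?_
      have hjn : j < n := lt_of_lt_of_le (Finset.mem_range.mp hj) hm
      rw [dif_pos hjn]
      simp only [hC]
      ring
    rw [this, Finset.sum_range_sub (fun j => r (i + 1) j - r i j) m]
    rw [r0r, r0r]
    ring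
  have col_tel : ∀ (j : Fin n) (m : ℕ), m ≤ n →
      (∑ i ∈ Finset.univ.filter (fun i : Fin n => (i : ℕ) < m), C i j)
        = r m (j + 1) - r m j := by
    intro j m hm
    rw [sum_filter_lt (fun i => C i j) m]
    have : (∑ i ∈ Finset.range m, (if h : i < n then C ⟨i, h⟩ j else 0))
        = ∑ i ∈ Finset.range m, ((r (i + 1) (j + 1) - r (i + 1) j) - (r i (j + 1) - r i j)) := by
      refine Finset.sum_congr rfl fun i hi => ?_
      have hin : i < n := lt_of_lt_of_le (Finset.mem_range.mp hi) hm
      rw [dif_pos hin]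
      simp only [hC]
      ring
    rw [this, Finset.sum_range_sub (fun i => r i (j + 1) - r i j) m]
    rw [r0l, r0l]
    ring
  have hIic_row : ∀ k : Fin n, Finset.Iic k
      = Finset.univ.filter (fun j : Fin n => (j : ℕ) < (k : ℕ) + 1) := by
    intro k
    ext j
    simp only [Finset.mem_Iic, Finset.mem_filter, Finset.mem_univ, true_and, Fin.le_def]
    omega
  have huniv : (Finset.univ : Finset (Fin n))
      = Finset.univ.filter (fun j : Fin n => (j : ℕ) < n) := by
    ext j; simp [j.isLt]
  refine ⟨C, ⟨?_, ?_, ?_, ?_, ?_⟩, ?_⟩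
  · -- entries
    intro i j
    have h1 := vstep i (j + 1)
    have h2 := vstep i (j : ℕ)
    have h3 := hstep (i : ℕ) (j : ℕ)
    have h4 := hstep ((i : ℕ) + 1) (j : ℕ)
    simp only [hC]
    omega
  · -- row partial sums
    intro i k
    rw [hIic_row k, row_tel i ((k : ℕ) + 1) k.isLt]
    have := vstep (i : ℕ) ((k : ℕ) + 1)
    omega
  · -- column partial sums
    intro j k
    rw [hIic_row k, col_tel j ((k : ℕ) + 1) k.isLt]
    have := hstep ((k : ℕ) + 1) (j : ℕ)
    omega
  · -- row sums
    intro i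
    rw [huniv, row_tel i n le_rfl, rfull_r ((i : ℕ) + 1) i.isLt, rfull_r (i : ℕ) (le_of_lt i.isLt)]
    push_cast
    ring
  · -- column sums
    intro j
    rw [huniv, col_tel j n le_rfl, rfull_l ((j : ℕ) + 1) j.isLt, rfull_l (j : ℕ) (le_of_lt j.isLt)]
    push_cast
    ring
  · -- rank function
    intro a b ha hb
    rw [rk_eq_RR, rk_eq_RR, rk_eq_RR]
    have hinner : ∀ i ∈ Finset.range a, (∑ j ∈ Finset.range b, extM C i j)
        = r (i + 1) b - r i b := by
      intro i hi
      have hin : i < n := lt_of_lt_of_le (Finset.mem_range.mp hi) ha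
      have : (∑ j ∈ Finset.range b, extM C i j)
          = ∑ j ∈ Finset.univ.filter (fun j : Fin n => (j : ℕ) < b), C ⟨i, hin⟩ j := by
        rw [sum_filter_lt (fun j => C ⟨i, hin⟩ j) b]
        refine Finset.sum_congr rfl fun j hj => ?_
        have hjn : j < n := lt_of_lt_of_le (Finset.mem_range.mp hj) hb
        simp [extM, hin, hjn]
      rw [this, row_tel ⟨i, hin⟩ b hb]
    calc RR C a b = ∑ i ∈ Finset.range a, (r (i + 1) b - r i b) :=
          Finset.sum_congr rfl hinner
      _ = r a b - r 0 b := Finset.sum_range_sub (fun i => r i b) a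
      _ = min (RR A a b) (RR B a b) := by rw [r0l]; simp [hr]
end
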